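/- Let $X$ be a Banach lattice and let $A, B$ be positive operators on $X$ with $A \le B$, where $B$ is band irreducible and $\sigma$-order continuous. If $(B - A)g = 0$ for some $g \gneq 0$ with $Bg = g$, then $A = B$. -/

import Mathlib

open Filter Topology

section AuxLemmas

variable {X : Type*} [NormedAddCommGroup X] [Lattice X] [HasSolidNorm X]
    [IsOrderedAddMonoid X]

/-- Subadditivity of the infimum for nonnegative elements. -/
lemma stmt18_inf_add {a b c : X} (ha : 0 ≤ a) (hb : 0 ≤ b) (hc : 0 ≤ c) :
    (a + b) ⊓ c ≤ a ⊓ c + b ⊓ c := by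
  have h1 : a ⊓ c + b ⊓ c = ((a + b) ⊓ (a + c)) ⊓ ((c + b) ⊓ (c + c)) := by
    rw [inf_add, add_inf, add_inf]
  rw [h1]
  refine le_inf (le_inf inf_le_left (inf_le_right.trans (le_add_of_nonneg_left ha)))
    (le_inf (inf_le_right.trans (le_add_of_nonneg_right hb))
      (inf_le_right.trans (le_add_of_nonneg_right hc)))

lemma stmt18_nsmul_inf {a b : X} (ha : 0 ≤ a) (hb : 0 ≤ b) (h : a ⊓ b = 0) :
    ∀ n : ℕ, (n • a) ⊓ b = 0 := by
  intro n
  induction n with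
  | zero => simpa using inf_eq_left.mpr hb
  | succ n ih =>
      refine le_antisymm ?_ (le_inf (nsmul_nonneg ha _) hb)
      calc ((n + 1) • a) ⊓ b = (n • a + a) ⊓ b := by rw [succ_nsmul]
        _ ≤ (n • a) ⊓ b + a ⊓ b := stmt18_inf_add (nsmul_nonneg ha n) ha hb
        _ = 0 := by rw [ih, h, add_zero]

lemma stmt18_nonneg_of_nsmul {z : X} {n : ℕ} (hn : n ≠ 0) (h : 0 ≤ n • z) : 0 ≤ z := by
  have hd : (n • z⁺) ⊓ z⁻ = 0 :=
    stmt18_nsmul_inf (posPart_nonneg z) (negPart_nonneg z) (posPart_inf_negPart_eq_zero z) n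
  have h1 : n • z = n • z⁺ - n • z⁻ := by rw [← nsmul_sub, posPart_sub_negPart]
  have h2 : n • z⁻ ≤ n • z⁺ := by
    have := h
    rw [h1, sub_nonneg] at this
    exact this
  have h3 : z⁻ ≤ n • z⁺ := by
    obtain ⟨m, rfl⟩ := Nat.exists_eq_succ_of_ne_zero hn
    calc z⁻ ≤ (m + 1) • z⁻ := by
          rw [succ_nsmul]; exact le_add_of_nonneg_left (nsmul_nonneg (negPart_nonneg z) m)
      _ ≤ (m + 1) • z⁺ := h2
  have h4 : z⁻ = 0 := by
    have : z⁻ = (n • z⁺) ⊓ z⁻ := (inf_eq_right.mpr h3).symm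
    rw [this, hd]
  have := posPart_sub_negPart z
  rw [h4, sub_zero] at this
  rw [← this]
  exact posPart_nonneg z

variable [NormedSpace ℝ X]

lemma stmt18_smul_nonneg {c : ℝ} {y : X} (hc : 0 ≤ c) (hy : 0 ≤ y) : 0 ≤ c • y := by
  have hrat : ∀ q : ℚ, 0 ≤ q → 0 ≤ (q : ℝ) • y := by
    intro q hq
    refine stmt18_nonneg_of_nsmul (n := q.den) q.den_nz ?_
    have key : (q.den : ℕ) • ((q : ℝ) • y) = q.num • y := by
      rw [← Nat.cast_smul_eq_nsmul ℝ, smul_smul, ← Int.cast_smul_eq_zsmul ℝ]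
      congr 1
      rw [Rat.cast_def]
      field_simp
    rw [key]
    exact zsmul_nonneg hy (Rat.num_nonneg.mpr hq)
  have hq : ∀ n : ℕ, ∃ q : ℚ, c < (q : ℝ) ∧ (q : ℝ) < c + 1 / (n + 1) := by
    intro n
    exact exists_rat_btwn (lt_add_of_pos_right c (by positivity))
  choose q hq1 hq2 using hq
  have hq0 : ∀ n, (0 : ℚ) ≤ q n := by
    intro n
    have : (0 : ℝ) ≤ (q n : ℝ) := le_of_lt (lt_of_le_of_lt hc (hq1 n))
    exact_mod_cast this
  have ht : Tendsto (fun n : ℕ => ((q n : ℝ))) atTop (𝓝 c) := by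
    have hub : Tendsto (fun n : ℕ => c + 1 / (n + 1 : ℝ)) atTop (𝓝 c) := by
      have := tendsto_const_nhds (x := c) (f := atTop (α := ℕ))
      have h2 := this.add tendsto_one_div_add_atTop_nhds_zero_nat
      simpa using h2
    exact tendsto_of_tendsto_of_tendsto_of_le_of_le tendsto_const_nhds hub
      (fun n => (hq1 n).le) (fun n => (hq2 n).le)
  have ht2 : Tendsto (fun n : ℕ => (q n : ℝ) • y) atTop (𝓝 (c • y)) := ht.smul_const y
  exact isClosed_nonneg.mem_of_tendsto ht2 (Filter.Eventually.of_forall fun n => hrat _ (hq0 n))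

lemma stmt18_eq_zero_of_forall_nsmul_le {a x : X} (ha : 0 ≤ a)
    (h : ∀ n : ℕ, n • a ≤ x) : a = 0 := by
  have hnorm : ∀ n : ℕ, (n : ℝ) * ‖a‖ ≤ ‖x‖ := by
    intro n
    have h1 : |n • a| ≤ |x| := by
      rw [abs_of_nonneg (nsmul_nonneg ha n)]
      exact (h n).trans (le_abs_self x)
    have h2 := HasSolidNorm.solid h1
    rwa [← Nat.cast_smul_eq_nsmul ℝ, norm_smul, Real.norm_natCast] at h2
  by_contra hne
  have hpos : 0 < ‖a‖ := norm_pos_iff.mpr hne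
  obtain ⟨n, hn⟩ := exists_nat_gt (‖x‖ / ‖a‖)
  have := hnorm n
  rw [← le_div_iff₀ hpos] at this
  exact absurd (lt_of_le_of_lt this hn) (lt_irrefl _)

end AuxLemmas

section AuxSmul

variable {X : Type*} [NormedAddCommGroup X] [Lattice X] [HasSolidNorm X]
    [IsOrderedAddMonoid X] [NormedSpace ℝ X]

lemma stmt18_smul_le_abs (c : ℝ) (y : X) : c • y ≤ |c| • |y| := by
  rw [← sub_nonneg]
  rcases le_total 0 c with hc | hc
  · rw [abs_of_nonneg hc, ← smul_sub]
    exact stmt18_smul_nonneg hc (sub_nonneg.mpr (le_abs_self y))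
  · rw [abs_of_nonpos hc]
    have h : (-c) • |y| - c • y = (-c) • (|y| + y) := by
      rw [smul_add, neg_smul, neg_smul, sub_eq_add_neg]
    rw [h]
    exact stmt18_smul_nonneg (neg_nonneg.mpr hc)
      (by simpa using add_le_add_left (neg_le_abs y) y)

lemma stmt18_abs_smul_le (c : ℝ) (y : X) : |c • y| ≤ |c| • |y| := by
  have h2 := stmt18_smul_le_abs (-c) y
  rw [neg_smul, abs_neg] at h2
  show c • y ⊔ -(c • y) ≤ |c| • |y|
  exact sup_le (stmt18_smul_le_abs c y) h2

end AuxSmul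
section Main

variable {X : Type*} [NormedAddCommGroup X] [Lattice X] [HasSolidNorm X]
    [IsOrderedAddMonoid X] [NormedSpace ℝ X]

/-- Membership in the band generated by `g`. -/
def stmt18mem (g y : X) : Prop := ∀ w : X, |w| ⊓ g = 0 → |y| ⊓ |w| = 0

lemma stmt18_inf_abs_nonneg (u v : X) : (0:X) ≤ |u| ⊓ |v| :=
  le_inf (abs_nonneg u) (abs_nonneg v)

/-- The band generated by `g`, as a submodule. -/
def stmt18S (g : X) : Submodule ℝ X where
  carrier := {y | stmt18mem g y}
  zero_mem' := by
    intro w hw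
    rw [abs_zero]
    exact inf_eq_left.mpr (abs_nonneg w)
  add_mem' := by
    intro y z hy hz w hw
    refine le_antisymm ?_ (stmt18_inf_abs_nonneg _ _)
    calc |y + z| ⊓ |w| ≤ (|y| + |z|) ⊓ |w| := inf_le_inf_right _ (abs_add_le y z)
      _ ≤ |y| ⊓ |w| + |z| ⊓ |w| := stmt18_inf_add (abs_nonneg y) (abs_nonneg z) (abs_nonneg w)
      _ = 0 := by rw [hy w hw, hz w hw, add_zero]
  smul_mem' := by
    intro c y hy w hw
    refine le_antisymm ?_ (stmt18_inf_abs_nonneg _ _)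
    have h1 : |c • y| ≤ (⌈|c|⌉₊ : ℕ) • |y| := by
      refine (stmt18_abs_smul_le c y).trans ?_
      rw [← Nat.cast_smul_eq_nsmul ℝ, ← sub_nonneg, ← sub_smul]
      exact stmt18_smul_nonneg (sub_nonneg.mpr (Nat.le_ceil _)) (abs_nonneg y)
    calc |c • y| ⊓ |w| ≤ ((⌈|c|⌉₊ : ℕ) • |y|) ⊓ |w| := inf_le_inf_right _ h1
      _ = 0 := stmt18_nsmul_inf (abs_nonneg y) (abs_nonneg w) (hy w hw) _

lemma stmt18_mem_S {g y : X} (h : stmt18mem g y) : y ∈ stmt18S g := h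

lemma stmt18_glb {g x : X} (hg0 : 0 ≤ g) (hx : 0 ≤ x) (hxB : stmt18mem g x) :
    Antitone (fun n : ℕ => x - x ⊓ (n • g)) ∧
    IsGLB (Set.range fun n : ℕ => x - x ⊓ (n • g)) 0 := by
  have hanti : Antitone (fun n : ℕ => x - x ⊓ (n • g)) := by
    intro m n hmn
    exact sub_le_sub_left (inf_le_inf_left x (nsmul_le_nsmul_left hg0 hmn)) x
  refine ⟨hanti, ⟨?_, ?_⟩⟩
  · rintro _ ⟨n, rfl⟩
    exact sub_nonneg.mpr inf_le_left
  · intro l hl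
    have hl' : ∀ n : ℕ, l ≤ x - x ⊓ (n • g) := fun n => hl ⟨n, rfl⟩
    have hlp : ∀ n : ℕ, l⁺ ≤ x - x ⊓ (n • g) := fun n =>
      sup_le (hl' n) (sub_nonneg.mpr inf_le_left)
    have hm0 : (0:X) ≤ l⁺ ⊓ g := le_inf (posPart_nonneg l) hg0
    have hind : ∀ n : ℕ, n • (l⁺ ⊓ g) ≤ x := by
      intro n
      induction n with
      | zero => simpa using hx
      | succ n ih =>
        have h1 : x ⊓ (n • g) + l⁺ ≤ x := by
          have h0 := hlp n
          rwa [le_sub_iff_add_le, add_comm] at h0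
        have h2 : n • (l⁺ ⊓ g) ≤ x ⊓ (n • g) :=
          le_inf ih (nsmul_le_nsmul_right inf_le_right n)
        calc (n + 1) • (l⁺ ⊓ g) = n • (l⁺ ⊓ g) + (l⁺ ⊓ g) := succ_nsmul _ _
          _ ≤ x ⊓ (n • g) + l⁺ := add_le_add h2 inf_le_left
          _ ≤ x := h1
    have hmz : l⁺ ⊓ g = 0 := stmt18_eq_zero_of_forall_nsmul_le hm0 hind
    have hxl : |x| ⊓ |l⁺| = 0 := hxB l⁺ (by rwa [abs_of_nonneg (posPart_nonneg l)])
    rw [abs_of_nonneg hx, abs_of_nonneg (posPart_nonneg l)] at hxl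
    have hlx : l⁺ ≤ x := by
      have h0 := hlp 0
      simpa [inf_eq_right.mpr hx] using h0
    have hlz : l⁺ = 0 := by
      have h3 : l⁺ ≤ x ⊓ l⁺ := le_inf hlx le_rfl
      rw [hxl] at h3
      exact le_antisymm h3 (posPart_nonneg l)
    calc l ≤ l⁺ := le_posPart l
      _ = 0 := hlz

end Main

/-- Let `A ≤ B` be positive operators on a Banach lattice with `B` band
irreducible and σ-order continuous.  If `B g = g` and `(B - A) g = 0` for some
`g ⪈ 0`, then `A = B`. -/
theorem stmt18 {X : Type*} [NormedAddCommGroup X] [Lattice X] [HasSolidNorm X]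
    [IsOrderedAddMonoid X] [NormedSpace ℝ X]
    [CompleteSpace X]
    (A B : X →L[ℝ] X)
    (hA : ∀ x : X, 0 ≤ x → 0 ≤ A x)
    (hAB : ∀ x : X, 0 ≤ x → A x ≤ B x)
    -- `B` is band irreducible:
    (hirr : ¬ ∃ 𝔅 : Submodule ℝ X,
        (∀ x ∈ 𝔅, ∀ y : X, |y| ≤ |x| → y ∈ 𝔅) ∧
        (∀ y : X, (∀ w : X, (∀ v ∈ 𝔅, |w| ⊓ |v| = 0) → |y| ⊓ |w| = 0) → y ∈ 𝔅) ∧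
        𝔅 ≠ ⊥ ∧ 𝔅 ≠ ⊤ ∧ (∀ x ∈ 𝔅, B x ∈ 𝔅))
    -- `B` is σ-order continuous:
    (hBoc : ∀ xs : ℕ → X, Antitone xs → IsGLB (Set.range xs) 0 →
      IsGLB (Set.range fun n => B (xs n)) 0)
    (g : X) (hg0 : 0 ≤ g) (hgne : g ≠ 0)
    (hBg : B g = g) (hABg : (B - A) g = 0) :
    A = B := by
  have hBpos : ∀ x : X, 0 ≤ x → 0 ≤ B x := fun x hx => (hA x hx).trans (hAB x hx)
  have hBmono : ∀ x y : X, 0 ≤ x → x ≤ y → B x ≤ B y := by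
    intro x y hx hxy
    have h := hBpos (y - x) (sub_nonneg.mpr hxy)
    rw [map_sub] at h
    exact sub_nonneg.mp h
  have hCg : B g - A g = 0 := by
    have h := hABg
    rwa [ContinuousLinearMap.sub_apply] at h
  -- `B` maps nonnegative band elements into the band
  have hBinv : ∀ x : X, 0 ≤ x → stmt18mem g x → stmt18mem g (B x) := by
    intro x hx hxB
    obtain ⟨hanti, hglb⟩ := stmt18_glb hg0 hx hxB
    have hBglb := hBoc _ hanti hglb
    intro w hw
    have hgw : g ⊓ |w| = 0 := by rwa [inf_comm] at hw
    have hBx : 0 ≤ B x := hBpos x hx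
    refine le_antisymm ?_ (stmt18_inf_abs_nonneg _ _)
    rw [abs_of_nonneg hBx]
    refine hBglb.2 ?_
    rintro _ ⟨n, rfl⟩
    have hin : (0:X) ≤ x ⊓ (n • g) := le_inf hx (nsmul_nonneg hg0 n)
    have hs : (0:X) ≤ x - x ⊓ (n • g) := sub_nonneg.mpr inf_le_left
    have hsplit : B x = B (x ⊓ (n • g)) + B (x - x ⊓ (n • g)) := by
      rw [← map_add]
      congr 1
      abel
    calc B x ⊓ |w| = (B (x ⊓ (n • g)) + B (x - x ⊓ (n • g))) ⊓ |w| := by rw [← hsplit]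
      _ ≤ B (x ⊓ (n • g)) ⊓ |w| + B (x - x ⊓ (n • g)) ⊓ |w| :=
          stmt18_inf_add (hBpos _ hin) (hBpos _ hs) (abs_nonneg w)
      _ ≤ 0 + B (x - x ⊓ (n • g)) := by
          refine add_le_add ?_ inf_le_left
          have h1 : B (x ⊓ (n • g)) ≤ n • g := by
            have h0 := hBmono (x ⊓ (n • g)) (n • g) hin inf_le_right
            rwa [map_nsmul, hBg] at h0
          calc B (x ⊓ (n • g)) ⊓ |w| ≤ (n • g) ⊓ |w| := inf_le_inf_right _ h1
            _ = 0 := stmt18_nsmul_inf hg0 (abs_nonneg w) hgw n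
      _ = B (x - x ⊓ (n • g)) := zero_add _
  -- every element lies in the band generated by `g`
  have htop : ∀ y : X, stmt18mem g y := by
    by_contra hnot
    push_neg at hnot
    obtain ⟨y0, hy0⟩ := hnot
    refine hirr ⟨stmt18S g, ?_, ?_, ?_, ?_, ?_⟩
    · -- solid
      intro x hxS y hyx w hw
      refine le_antisymm ?_ (stmt18_inf_abs_nonneg _ _)
      calc |y| ⊓ |w| ≤ |x| ⊓ |w| := inf_le_inf_right _ hyx
        _ = 0 := hxS w hw
    · -- band closed
      intro y hy w hw
      refine hy w ?_
      intro v hv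
      rw [inf_comm]
      exact hv w hw
    · -- ≠ ⊥
      intro hbot
      have hgS : g ∈ stmt18S g :=
        stmt18_mem_S (fun w hw => by rw [abs_of_nonneg hg0, inf_comm]; exact hw)
      rw [hbot, Submodule.mem_bot] at hgS
      exact hgne hgS
    · -- ≠ ⊤
      intro htop'
      exact hy0 (htop' ▸ Submodule.mem_top : y0 ∈ stmt18S g)
    · -- B-invariant
      intro x hxS
      have hp : x⁺ ∈ stmt18S g := by
        intro w hw
        refine le_antisymm ?_ (stmt18_inf_abs_nonneg _ _)
        have h1 : |x⁺| ≤ |x| := by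
          rw [abs_of_nonneg (posPart_nonneg x), ← posPart_add_negPart x]
          exact le_add_of_nonneg_right (negPart_nonneg x)
        calc |x⁺| ⊓ |w| ≤ |x| ⊓ |w| := inf_le_inf_right _ h1
          _ = 0 := hxS w hw
      have hn : x⁻ ∈ stmt18S g := by
        intro w hw
        refine le_antisymm ?_ (stmt18_inf_abs_nonneg _ _)
        have h1 : |x⁻| ≤ |x| := by
          rw [abs_of_nonneg (negPart_nonneg x), ← posPart_add_negPart x]
          exact le_add_of_nonneg_left (posPart_nonneg x)
        calc |x⁻| ⊓ |w| ≤ |x| ⊓ |w| := inf_le_inf_right _ h1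
          _ = 0 := hxS w hw
      have hBp : B x⁺ ∈ stmt18S g := stmt18_mem_S (hBinv _ (posPart_nonneg x) hp)
      have hBn : B x⁻ ∈ stmt18S g := stmt18_mem_S (hBinv _ (negPart_nonneg x) hn)
      have hx' : B x = B x⁺ - B x⁻ := by rw [← map_sub, posPart_sub_negPart]
      rw [hx']
      exact Submodule.sub_mem _ hBp hBn
  -- conclude `A x = B x` for `0 ≤ x`
  have hfin : ∀ x : X, 0 ≤ x → A x = B x := by
    intro x hx
    obtain ⟨hanti, hglb⟩ := stmt18_glb hg0 hx (htop x)
    have hBglb := hBoc _ hanti hglb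
    have hC0 : 0 ≤ B x - A x := sub_nonneg.mpr (hAB x hx)
    have hlb : (B x - A x) ∈ lowerBounds (Set.range fun n : ℕ => B (x - x ⊓ (n • g))) := by
      rintro _ ⟨n, rfl⟩
      have hin : (0:X) ≤ x ⊓ (n • g) := le_inf hx (nsmul_nonneg hg0 n)
      have hs : (0:X) ≤ x - x ⊓ (n • g) := sub_nonneg.mpr inf_le_left
      have hCn : B (x ⊓ (n • g)) - A (x ⊓ (n • g)) = 0 := by
        refine le_antisymm ?_ (sub_nonneg.mpr (hAB _ hin))
        have hmono : B (x ⊓ (n • g)) - A (x ⊓ (n • g)) ≤ B (n • g) - A (n • g) := by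
          have h0 := hAB (n • g - x ⊓ (n • g)) (sub_nonneg.mpr inf_le_right)
          rw [map_sub, map_sub] at h0
          rw [sub_le_sub_iff] at h0 ⊢
          rwa [add_comm (A (n • g)) (B (x ⊓ (n • g)))] at h0
        have hng : B (n • g) - A (n • g) = n • (B g - A g) := by
          rw [map_nsmul, map_nsmul, ← nsmul_sub]
        rwa [hng, hCg, nsmul_zero] at hmono
      have hsplitB : B x = B (x ⊓ (n • g)) + B (x - x ⊓ (n • g)) := by
        rw [← map_add]; congr 1; abel
      have hsplitA : A x = A (x ⊓ (n • g)) + A (x - x ⊓ (n • g)) := by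
        rw [← map_add]; congr 1; abel
      have key : B x - A x = (B (x ⊓ (n • g)) - A (x ⊓ (n • g)))
          + (B (x - x ⊓ (n • g)) - A (x - x ⊓ (n • g))) := by
        rw [hsplitB, hsplitA]; abel
      rw [key, hCn, zero_add]
      exact sub_le_self _ (hA _ hs)
    have hle : B x - A x ≤ 0 := hBglb.2 hlb
    exact (sub_eq_zero.mp (le_antisymm hle hC0)).symm
  ext x
  rw [← posPart_sub_negPart x, map_sub, map_sub,
    hfin _ (posPart_nonneg x), hfin _ (negPart_nonneg x)]
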